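/- Let φ : ℝ → ℝ satisfy φ(s) = F_v(s) - (θ_c/2)s² with F_v(s) = (1/2)[(1+s)ln(1+s)+(1-s)ln(1-s)] and θ_c > 1. Then F has exactly two global minimizers ±s* in (-1,1) with s* ∈ (0,1) satisfying f_v(s*) = θ_c s*, where f_v(s) = (1/2)[ln(1+s)-ln(1-s)]; i.e., the equation (1/2)ln((1+s)/(1-s)) = θ_c s has a unique positive solution in (0,1). -/

import Mathlib

open Real Set

noncomputable def Fv (s : ℝ) : ℝ :=
  (1/2) * ((1 + s) * Real.log (1 + s) + (1 - s) * Real.log (1 - s))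

noncomputable def fv (s : ℝ) : ℝ := (1/2) * (Real.log (1 + s) - Real.log (1 - s))

noncomputable def F (θc : ℝ) (s : ℝ) : ℝ := Fv s - (θc/2) * s^2

noncomputable def gg (θc : ℝ) (s : ℝ) : ℝ := fv s - θc * s

lemma hasDerivAt_fv {s : ℝ} (h1 : -1 < s) (h2 : s < 1) :
    HasDerivAt fv (1/(1-s^2)) s := by
  have h1' : (0:ℝ) < 1 + s := by linarith
  have h2' : (0:ℝ) < 1 - s := by linarith
  have d1 : HasDerivAt (fun x : ℝ => Real.log (1 + x)) (1/(1+s)) s := by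
    have := (Real.hasDerivAt_log (ne_of_gt h1')).comp s ((hasDerivAt_id s).const_add 1)
    exact this.congr_deriv (by simp)
  have d2 : HasDerivAt (fun x : ℝ => Real.log (1 - x)) (-(1/(1-s))) s := by
    have := (Real.hasDerivAt_log (ne_of_gt h2')).comp s ((hasDerivAt_id s).const_sub 1)
    exact this.congr_deriv (by simp)
  have := (d1.sub d2).const_mul (1/2 : ℝ)
  have hne : (1:ℝ) - s^2 ≠ 0 := by nlinarith
  have heq : (1/2 : ℝ) * (1/(1+s) - -(1/(1-s))) = 1/(1-s^2) := by
    field_simp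
    ring
  rw [heq] at this
  exact this

lemma hasDerivAt_Fv {s : ℝ} (h1 : -1 < s) (h2 : s < 1) :
    HasDerivAt Fv (fv s) s := by
  have h1' : (0:ℝ) < 1 + s := by linarith
  have h2' : (0:ℝ) < 1 - s := by linarith
  have d1 : HasDerivAt (fun x : ℝ => Real.log (1 + x)) (1/(1+s)) s := by
    have := (Real.hasDerivAt_log (ne_of_gt h1')).comp s ((hasDerivAt_id s).const_add 1)
    exact this.congr_deriv (by simp)
  have d2 : HasDerivAt (fun x : ℝ => Real.log (1 - x)) (-(1/(1-s))) s := by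
    have := (Real.hasDerivAt_log (ne_of_gt h2')).comp s ((hasDerivAt_id s).const_sub 1)
    exact this.congr_deriv (by simp)
  have p1 : HasDerivAt (fun x : ℝ => (1+x) * Real.log (1+x))
      (1 * Real.log (1+s) + (1+s) * (1/(1+s))) s :=
    HasDerivAt.mul ((hasDerivAt_id s).const_add 1) d1
  have p2 : HasDerivAt (fun x : ℝ => (1-x) * Real.log (1-x))
      ((-1) * Real.log (1-s) + (1-s) * (-(1/(1-s)))) s :=
    HasDerivAt.mul ((hasDerivAt_id s).const_sub 1) d2
  have := (p1.add p2).const_mul (1/2 : ℝ)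
  have heq : (1/2 : ℝ) * ((1 * Real.log (1+s) + (1+s) * (1/(1+s))) +
      ((-1) * Real.log (1-s) + (1-s) * (-(1/(1-s))))) = fv s := by
    unfold fv
    field_simp
    ring
  rw [heq] at this
  exact this

lemma hasDerivAt_gg {θc s : ℝ} (h1 : -1 < s) (h2 : s < 1) :
    HasDerivAt (gg θc) (1/(1-s^2) - θc) s := by
  have := (hasDerivAt_fv h1 h2).sub ((hasDerivAt_id s).const_mul θc)
  exact this.congr_deriv (by ring)

lemma hasDerivAt_F {θc s : ℝ} (h1 : -1 < s) (h2 : s < 1) :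
    HasDerivAt (F θc) (gg θc s) s := by
  have := (hasDerivAt_Fv h1 h2).sub (((hasDerivAt_pow 2 s)).const_mul (θc/2))
  exact this.congr_deriv (by unfold gg; push_cast; ring)

lemma contOn_gg {θc : ℝ} {D : Set ℝ} (hD : D ⊆ Ioo (-1:ℝ) 1) :
    ContinuousOn (gg θc) D := fun x hx =>
  ((hasDerivAt_gg (hD hx).1 (hD hx).2).continuousAt).continuousWithinAt

lemma contOn_F {θc : ℝ} {D : Set ℝ} (hD : D ⊆ Ioo (-1:ℝ) 1) :
    ContinuousOn (F θc) D := fun x hx =>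
  ((hasDerivAt_F (hD hx).1 (hD hx).2).continuousAt).continuousWithinAt

lemma deriv_gg {θc s : ℝ} (h1 : -1 < s) (h2 : s < 1) :
    deriv (gg θc) s = 1/(1-s^2) - θc := (hasDerivAt_gg h1 h2).deriv

lemma gg_strictConvex (θc : ℝ) : StrictConvexOn ℝ (Ico (0:ℝ) 1) (gg θc) := by
  apply StrictMonoOn.strictConvexOn_of_deriv (convex_Ico 0 1)
    (contOn_gg (fun x hx => ⟨by linarith [hx.1], hx.2⟩))
  rw [interior_Ico]
  intro a ha b hb hab
  rw [deriv_gg (by linarith [ha.1]) ha.2, deriv_gg (by linarith [hb.1]) hb.2]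
  have h1 : (0:ℝ) < 1 - b^2 := by nlinarith [hb.1, hb.2]
  have h2 : 1 - b^2 < 1 - a^2 := by nlinarith [ha.1, hb.1]
  have := one_div_lt_one_div_of_lt h1 h2
  linarith

lemma gg_zero (θc : ℝ) : gg θc 0 = 0 := by simp [gg, fv]

lemma gg_neg_of_root {θc a : ℝ} (ha : a ∈ Ioo (0:ℝ) 1) (h0 : gg θc a = 0)
    {s : ℝ} (hs : s ∈ Ioo 0 a) : gg θc s < 0 := by
  have hsc := gg_strictConvex θc
  have h0m : (0:ℝ) ∈ Ico (0:ℝ) 1 := ⟨le_refl 0, one_pos⟩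
  have ham : a ∈ Ico (0:ℝ) 1 := ⟨ha.1.le, ha.2⟩
  set t := s / a with ht
  have hapos := ha.1
  have htpos : 0 < t := div_pos hs.1 hapos
  have htlt : t < 1 := (div_lt_one hapos).2 hs.2
  have key := hsc.2 h0m ham (ne_of_lt hapos) (by linarith : 0 < 1 - t) htpos
    (by ring : (1 - t) + t = 1)
  simp only [smul_eq_mul, mul_zero, zero_add, gg_zero, h0, mul_zero, add_zero] at key
  have hts : t * a = s := div_mul_cancel₀ s (ne_of_gt hapos)
  rw [hts] at key
  exact key

lemma gg_pos_of_root {θc a : ℝ} (ha : a ∈ Ioo (0:ℝ) 1) (h0 : gg θc a = 0)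
    {s : ℝ} (hs : s ∈ Ioo a 1) : 0 < gg θc s := by
  have hsc := gg_strictConvex θc
  have h0m : (0:ℝ) ∈ Ico (0:ℝ) 1 := ⟨le_refl 0, one_pos⟩
  have hsm : s ∈ Ico (0:ℝ) 1 := ⟨by linarith [ha.1, hs.1], hs.2⟩
  set t := a / s with ht
  have hspos : 0 < s := by linarith [ha.1, hs.1]
  have htpos : 0 < t := div_pos ha.1 hspos
  have htlt : t < 1 := (div_lt_one hspos).2 hs.1
  have key := hsc.2 h0m hsm (ne_of_lt hspos) (by linarith : 0 < 1 - t) htpos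
    (by ring : (1 - t) + t = 1)
  simp only [smul_eq_mul, mul_zero, zero_add, gg_zero, mul_zero, add_zero] at key
  have hts : t * s = a := div_mul_cancel₀ a (ne_of_gt hspos)
  rw [hts, h0] at key
  by_contra hcon
  push_neg at hcon
  nlinarith

lemma exists_root {θc : ℝ} (hθ : 1 < θc) : ∃ a ∈ Ioo (0:ℝ) 1, gg θc a = 0 := by
  have hθ0 : 0 < θc := by linarith
  -- δ
  set δ := Real.sqrt ((θc - 1)/θc) / 2 with hδdef
  have hratpos : 0 < (θc - 1)/θc := div_pos (by linarith) hθ0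
  have hratlt : (θc - 1)/θc < 1 := (div_lt_one hθ0).2 (by linarith)
  have hsq : Real.sqrt ((θc-1)/θc) < 1 := by
    have := Real.sqrt_lt_sqrt (le_of_lt hratpos) hratlt
    simpa using this
  have hδpos : 0 < δ := by positivity
  have hδlt : δ < 1 := by rw [hδdef]; linarith
  have hδsq : δ^2 < (θc-1)/θc := by
    rw [hδdef, div_pow, Real.sq_sqrt (le_of_lt hratpos)]
    nlinarith [hratpos]
  -- g strictly decreasing on [0,δ]
  have hanti : StrictAntiOn (gg θc) (Icc 0 δ) := by
    apply strictAntiOn_of_deriv_neg (convex_Icc 0 δ)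
      (contOn_gg (fun x hx => ⟨by linarith [hx.1], by linarith [hx.2]⟩))
    rw [interior_Icc]
    intro x hx
    rw [deriv_gg (by linarith [hx.1]) (by linarith [hx.2])]
    have hx2 : x^2 < (θc-1)/θc := by nlinarith [hx.1, hx.2, hδpos]
    have h1 : 0 < 1 - x^2 := by nlinarith [hratlt]
    have : 1/(1-x^2) < θc := by
      rw [div_lt_iff₀ h1]
      rw [lt_div_iff₀ hθ0] at hx2
      nlinarith
    linarith
  have hgδ : gg θc δ < 0 := by
    have := hanti ⟨le_refl 0, hδpos.le⟩ ⟨hδpos.le, le_refl δ⟩ hδpos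
    rwa [gg_zero] at this
  -- b
  set E := Real.exp (2*θc) with hE
  have hE1 : 1 < E := by
    rw [hE]; nlinarith [Real.add_one_lt_exp (show 2*θc ≠ 0 by positivity)]
  set b := (E - 1)/(E + 1) with hb
  have hEp : (0:ℝ) < E + 1 := by linarith
  have hbpos : 0 < b := div_pos (by linarith) hEp
  have hblt : b < 1 := (div_lt_one hEp).2 (by linarith)
  have hfvb : fv b = θc := by
    have h1b : (0:ℝ) < 1 + b := by linarith
    have h2b : (0:ℝ) < 1 - b := by linarith
    unfold fv
    rw [← Real.log_div (ne_of_gt h1b) (ne_of_gt h2b)]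
    have : (1+b)/(1-b) = E := by
      rw [hb]; field_simp; ring
    rw [this, hE, Real.log_exp]
    ring
  have hgb : 0 < gg θc b := by
    unfold gg
    rw [hfvb]
    nlinarith
  have hδb : δ < b := by
    by_contra h
    push_neg at h
    have := hanti ⟨le_refl 0, hδpos.le⟩ ⟨hbpos.le, h⟩ hbpos
    rw [gg_zero] at this
    linarith
  have hiv := intermediate_value_Ioo hδb.le
    (contOn_gg (θc := θc) (fun x hx => ⟨by linarith [hx.1], by linarith [hx.2]⟩) :
      ContinuousOn (gg θc) (Icc δ b))
  have h0mem : (0:ℝ) ∈ Ioo (gg θc δ) (gg θc b) := ⟨hgδ, hgb⟩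
  obtain ⟨a, haI, ha0⟩ := hiv h0mem
  exact ⟨a, ⟨by linarith [haI.1], by linarith [haI.2]⟩, ha0⟩

lemma F_even (θc s : ℝ) : F θc (-s) = F θc s := by
  unfold F Fv
  have h1 : 1 + -s = 1 - s := by ring
  have h2 : 1 - -s = 1 + s := by ring
  rw [h1, h2]
  ring

theorem stmt_19 (θc : ℝ) (hθ : 1 < θc) :
    (∃! s : ℝ, s ∈ Set.Ioo (0:ℝ) 1 ∧ fv s = θc * s) ∧
    ∀ s' : ℝ, s' ∈ Set.Ioo (0:ℝ) 1 → fv s' = θc * s' →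
      {φ ∈ Set.Ioo (-1:ℝ) 1 | IsMinOn (F θc) (Set.Ioo (-1:ℝ) 1) φ}
        = {s', -s'} := by
  obtain ⟨a, haI, ha0⟩ := exists_root hθ
  have root_iff : ∀ s : ℝ, (fv s = θc * s) ↔ gg θc s = 0 := by
    intro s; unfold gg; constructor <;> intro h <;> linarith
  have uniq : ∀ b : ℝ, b ∈ Ioo (0:ℝ) 1 → gg θc b = 0 → b = a := by
    intro b hbI hb0
    rcases lt_trichotomy b a with h | h | h
    · exact absurd hb0 (ne_of_lt (gg_neg_of_root haI ha0 ⟨hbI.1, h⟩))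
    · exact h
    · exact absurd hb0 (ne_of_gt (gg_pos_of_root haI ha0 ⟨h, hbI.2⟩))
  constructor
  · exact ⟨a, ⟨haI, (root_iff a).2 ha0⟩, fun b ⟨hbI, hb⟩ => uniq b hbI ((root_iff b).1 hb)⟩
  · intro s' hs'I hs'
    have hs'0 : gg θc s' = 0 := (root_iff s').1 hs'
    -- monotonicity of F
    have hanti : StrictAntiOn (F θc) (Icc 0 s') := by
      apply strictAntiOn_of_deriv_neg (convex_Icc 0 s')
        (contOn_F (fun x hx => ⟨by linarith [hx.1], by linarith [hx.2, hs'I.2]⟩))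
      rw [interior_Icc]
      intro x hx
      rw [(hasDerivAt_F (by linarith [hx.1]) (by linarith [hx.2, hs'I.2])).deriv]
      exact gg_neg_of_root hs'I hs'0 hx
    have hmono : StrictMonoOn (F θc) (Ico s' 1) := by
      apply strictMonoOn_of_deriv_pos (convex_Ico s' 1)
        (contOn_F (fun x hx => ⟨by linarith [hx.1, hs'I.1], hx.2⟩))
      rw [interior_Ico]
      intro x hx
      rw [(hasDerivAt_F (by linarith [hx.1, hs'I.1]) hx.2).deriv]
      exact gg_pos_of_root hs'I hs'0 hx
    -- F s' ≤ F x for all x in Ioo (-1) 1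
    have hminval : ∀ x ∈ Ioo (-1:ℝ) 1, F θc s' ≤ F θc x := by
      have key : ∀ y ∈ Ico (0:ℝ) 1, F θc s' ≤ F θc y := by
        intro y hy
        rcases le_or_gt y s' with h | h
        · rcases eq_or_lt_of_le h with h' | h'
          · rw [h']
          · exact (hanti ⟨hy.1, h⟩ ⟨hs'I.1.le, le_refl s'⟩ h').le
        · exact (hmono ⟨le_refl s', hs'I.2⟩ ⟨h.le, hy.2⟩ h).le
      intro x hx
      rcases le_or_gt 0 x with h | h
      · exact key x ⟨h, hx.2⟩
      · have hev := F_even θc (-x)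
        rw [neg_neg] at hev
        rw [hev]
        exact key (-x) ⟨by linarith, by linarith [hx.1]⟩
    have hmins' : IsMinOn (F θc) (Ioo (-1:ℝ) 1) s' := by
      rw [isMinOn_iff]; exact hminval
    have hminns' : IsMinOn (F θc) (Ioo (-1:ℝ) 1) (-s') := by
      rw [isMinOn_iff]
      intro x hx
      rw [F_even]
      exact hminval x hx
    have hs'mem : s' ∈ Ioo (-1:ℝ) 1 := ⟨by linarith [hs'I.1], hs'I.2⟩
    have hns'mem : -s' ∈ Ioo (-1:ℝ) 1 := ⟨by linarith [hs'I.2], by linarith [hs'I.1]⟩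
    ext φ
    simp only [Set.mem_setOf_eq, Set.mem_insert_iff, Set.mem_singleton_iff]
    constructor
    · rintro ⟨hφI, hφmin⟩
      have heq : F θc φ = F θc s' :=
        le_antisymm (isMinOn_iff.1 hφmin s' hs'mem) (hminval φ hφI)
      -- show |φ| = s'
      have habs : |φ| = s' := by
        have habsI : |φ| ∈ Ico (0:ℝ) 1 := ⟨abs_nonneg φ, abs_lt.2 ⟨hφI.1, hφI.2⟩⟩
        have hFabs : F θc |φ| = F θc s' := by
          rcases le_or_gt 0 φ with h | h
          · rw [abs_of_nonneg h]; exact heq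
          · rw [abs_of_neg h, F_even]; exact heq
        rcases lt_trichotomy (|φ|) s' with h | h | h
        · have := hanti ⟨habsI.1, h.le⟩ ⟨hs'I.1.le, le_refl s'⟩ h
          rw [hFabs] at this; exact absurd this (lt_irrefl _)
        · exact h
        · have := hmono ⟨le_refl s', hs'I.2⟩ ⟨h.le, habsI.2⟩ h
          rw [hFabs] at this; exact absurd this (lt_irrefl _)
      rcases abs_eq (by linarith [hs'I.1] : (0:ℝ) ≤ s') |>.1 habs with h | h
      · exact Or.inl h
      · exact Or.inr h
    · rintro (rfl | rfl)
      · exact ⟨hs'mem, hmins'⟩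
      · exact ⟨hns'mem, hminns'⟩
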